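/- arXiv:1610.02167 — 5 statements merged into one kernel-verified Lean document; each statement's English description precedes it below -/
import Mathlib

section
/- Let a > 0 and let λ ∈ ℂ with dist(λ, Z_a) ≤ π/(2a), where Z_a = {2πk/a : k ∈ ℤ}. Let x_λ denote a nearest point of Z_a to λ. Then the sum over x ∈ Z_a of |Im λ|^2/|x - conj(λ)|^2 is bounded by |Im λ/(λ - x_λ)|^2 + 2·(a|Im λ|/(2π))^2 · Σ_{k≥1} 1/(k - 1/4)^2, and hence by a universal constant independent of λ and a. -/
/-!
For real `x` one has `|x - conj λ| = |λ - x|`, so the nearest lattice point `x₀` contributes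
exactly `|Im λ / (λ - x₀)|² ≤ 1`. Since `λ` lies within a quarter period `π/(2a)` of `x₀`, the
triangle inequality keeps it at distance at least `(2π/a)(|m| - 1/4)` from `x₀ + 2πm/a`, and
`a|Im λ|/(2π) ≤ 1/4`. Summing over `m ≠ 0` gives the first bound, and the series
`Σ 1/(k - 1/4)²` is at most `4` by telescoping, which gives the constant `2`.
-/

open Real Complex Finset ComplexConjugate

lemma sum_range_one_div_add_three_quarters_sq_le (n : ℕ) :
    ∑ k ∈ range n, 1 / ((k : ℝ) + 1 - 1 / 4) ^ 2 ≤ 4 := by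
  -- telescoping: 1/(k + 3/4)² ≤ 1/((k + 1/4)(k + 5/4)) = 1/(k + 1/4) - 1/(k + 5/4)
  have htel : ∀ k : ℕ, 1 / ((k : ℝ) + 1 - 1 / 4) ^ 2 ≤
      1 / ((k : ℝ) + 1 / 4) - 1 / (((k + 1 : ℕ) : ℝ) + 1 / 4) := by
    intro k
    have hk : (0 : ℝ) ≤ k := k.cast_nonneg
    have hk' : (0 : ℝ) < k + 1 - 1 / 4 := by linarith
    push_cast
    rw [div_sub_div _ _ (by positivity) (by positivity),
      div_le_div_iff₀ (by positivity) (by positivity)]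
    nlinarith
  calc ∑ k ∈ range n, 1 / ((k : ℝ) + 1 - 1 / 4) ^ 2
      ≤ ∑ k ∈ range n, (1 / ((k : ℝ) + 1 / 4) - 1 / (((k + 1 : ℕ) : ℝ) + 1 / 4)) :=
        sum_le_sum fun k _ => htel k
    _ = 4 - 1 / ((n : ℝ) + 1 / 4) := by
        rw [sum_range_sub' (fun k : ℕ => 1 / ((k : ℝ) + 1 / 4))]
        norm_num
    _ ≤ 4 := sub_le_self _ (by positivity)

lemma summable_one_div_add_three_quarters_sq :
    Summable fun k : ℕ => 1 / ((k : ℝ) + 1 - 1 / 4) ^ 2 :=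
  summable_of_sum_range_le (fun _ => by positivity) sum_range_one_div_add_three_quarters_sq_le

lemma tsum_one_div_add_three_quarters_sq_le :
    ∑' k : ℕ, 1 / ((k : ℝ) + 1 - 1 / 4) ^ 2 ≤ 4 :=
  Real.tsum_le_of_sum_range_le (fun _ => by positivity) sum_range_one_div_add_three_quarters_sq_le

lemma tsum_int_le_add_two_mul_tsum {F : ℤ → ℝ} (hF : ∀ k, 0 ≤ F k) {g : ℕ → ℝ}
    (hg : Summable g) (k₀ : ℤ) (hle : ∀ (m : ℤ) (n : ℕ), |m| = n + 1 → F (k₀ + m) ≤ g n) :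
    ∑' k, F k ≤ F k₀ + 2 * ∑' n, g n := by
  have hpos : ∀ n : ℕ, F (k₀ + (n + 1)) ≤ g n :=
    fun n => hle _ n (abs_of_nonneg (by positivity))
  have hneg : ∀ n : ℕ, F (k₀ + -(n + 1)) ≤ g n :=
    fun n => hle _ n (by rw [abs_neg, abs_of_nonneg (by positivity)])
  have hpos_summable := hg.of_nonneg_of_le (fun _ => hF _) hpos
  have hneg_summable := hg.of_nonneg_of_le (fun _ => hF _) hneg
  calc ∑' k, F k = ∑' m, F (k₀ + m) := ((Equiv.addLeft k₀).tsum_eq F).symm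
    _ = (∑' n : ℕ, F (k₀ + (n + 1))) + F (k₀ + 0) + ∑' n : ℕ, F (k₀ + -(n + 1)) :=
        tsum_of_add_one_of_neg_add_one hpos_summable hneg_summable
    _ ≤ (∑' n, g n) + F k₀ + ∑' n, g n := by
        rw [add_zero]
        gcongr ?_ + _ + ?_
        · exact hpos_summable.tsum_le_tsum hpos hg
        · exact hneg_summable.tsum_le_tsum hneg hg
    _ = F k₀ + 2 * ∑' n, g n := by ring

lemma norm_ofReal_sub_conj (x : ℝ) (z : ℂ) : ‖(x : ℂ) - conj z‖ = dist z x := by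
  rw [← RCLike.norm_conj, map_sub, conj_conj, Complex.conj_ofReal, ← dist_eq_norm, dist_comm]

lemma abs_im_le_dist_ofReal (z : ℂ) (x : ℝ) : |z.im| ≤ dist z x := by
  simpa [dist_eq_norm] using abs_im_le_norm (z - x)

lemma le_dist_shifted_lattice_point {a : ℝ} (ha : 0 < a) {z : ℂ} {k₀ m : ℤ} {n : ℕ}
    (hz : dist z ↑(2 * π * k₀ / a) ≤ π / (2 * a)) (hm : |m| = n + 1) :
    2 * π / a * ((n : ℝ) + 1 - 1 / 4) ≤ dist z ↑(2 * π * ↑(k₀ + m) / a) := by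
  have hm' : |(m : ℝ)| = n + 1 := by exact_mod_cast hm
  have hstep : dist (↑(2 * π * k₀ / a) : ℂ) ↑(2 * π * ↑(k₀ + m) / a) = 2 * π / a * (n + 1) := by
    rw [isometry_ofReal.dist_eq, Real.dist_eq, ← hm',
      show 2 * π * k₀ / a - 2 * π * ↑(k₀ + m) / a = -(2 * π / a * m) by push_cast; ring,
      abs_neg, abs_mul, abs_of_pos (by positivity)]
  have htri := dist_triangle_left (↑(2 * π * k₀ / a) : ℂ) ↑(2 * π * ↑(k₀ + m) / a) z
  have hquarter : π / (2 * a) = 2 * π / a * (1 / 4) := by field_simp; ring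
  linarith

lemma im_sq_div_dist_sq_le {a : ℝ} (ha : 0 < a) {z : ℂ} {k₀ m : ℤ} {n : ℕ}
    (hz : dist z ↑(2 * π * k₀ / a) ≤ π / (2 * a)) (hm : |m| = n + 1) :
    |z.im| ^ 2 / dist z ↑(2 * π * ↑(k₀ + m) / a) ^ 2 ≤
      (a * |z.im| / (2 * π)) ^ 2 * (1 / ((n : ℝ) + 1 - 1 / 4) ^ 2) := by
  have hn : (0 : ℝ) < n + 1 - 1 / 4 := by linarith [n.cast_nonneg (α := ℝ)]
  calc |z.im| ^ 2 / dist z ↑(2 * π * ↑(k₀ + m) / a) ^ 2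
      ≤ |z.im| ^ 2 / (2 * π / a * ((n : ℝ) + 1 - 1 / 4)) ^ 2 := by
        gcongr
        exact le_dist_shifted_lattice_point ha hz hm
    _ = (a * |z.im| / (2 * π)) ^ 2 * (1 / ((n : ℝ) + 1 - 1 / 4) ^ 2) := by
        field_simp

/-- Let `a > 0` and `λ ∈ ℂ` with `dist(λ, Z_a) ≤ π/(2a)`, where `Z_a = {2πk/a : k ∈ ℤ}`,
and let `x₀` be a nearest point of `Z_a` to `λ`.  Then
`Σ_{x ∈ Z_a} |Im λ|²/|x - conj λ|²` is bounded by
`|Im λ/(λ - x₀)|² + 2·(a|Im λ|/(2π))²·Σ_{k≥1} 1/(k - 1/4)²`, hence by a universal constant. -/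
theorem stmt_3 :
    ∃ C : ℝ, 0 < C ∧ ∀ (a : ℝ) (z : ℂ) (x₀ : ℝ), 0 < a →
      (∃ k : ℤ, x₀ = 2*Real.pi*k/a) →
      (∀ k : ℤ, dist z ((x₀ : ℝ) : ℂ) ≤ dist z (((2*Real.pi*(k:ℝ)/a : ℝ)) : ℂ)) →
      dist z ((x₀ : ℝ) : ℂ) ≤ Real.pi/(2*a) →
      ((∑' k : ℤ, |z.im|^2 / ‖((2*Real.pi*(k:ℝ)/a : ℝ) : ℂ) - (starRingEnd ℂ) z‖^2)
          ≤ ‖((z.im : ℝ) : ℂ) / (z - ((x₀ : ℝ) : ℂ))‖^2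
            + 2 * (a * |z.im| / (2*Real.pi))^2 * (∑' k : ℕ, 1 / ((k:ℝ) + 1 - 1/4)^2)) ∧
      (∑' k : ℤ, |z.im|^2 / ‖((2*Real.pi*(k:ℝ)/a : ℝ) : ℂ) - (starRingEnd ℂ) z‖^2) ≤ C := by
  refine ⟨2, two_pos, fun a z x₀ ha ⟨k₀, hx₀⟩ _ hz => ?_⟩
  subst hx₀
  simp_rw [norm_ofReal_sub_conj]
  have hsum := tsum_int_le_add_two_mul_tsum
    (F := fun k : ℤ => |z.im| ^ 2 / dist z ↑(2 * π * k / a) ^ 2) (fun _ => by positivity)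
    (summable_one_div_add_three_quarters_sq.mul_left _) k₀
    (fun m n hm => im_sq_div_dist_sq_le ha hz hm)
  rw [tsum_mul_left, ← mul_assoc] at hsum
  have him : |z.im| ≤ dist z ↑(2 * π * k₀ / a) := abs_im_le_dist_ofReal _ _
  have hcentral : |z.im| ^ 2 / dist z ↑(2 * π * k₀ / a) ^ 2 =
      ‖(z.im : ℂ) / (z - ↑(2 * π * k₀ / a))‖ ^ 2 := by
    rw [norm_div, div_pow, norm_real, Real.norm_eq_abs, dist_eq_norm]
  refine ⟨hcentral ▸ hsum, hsum.trans ?_⟩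
  have hcentral_le : |z.im| ^ 2 / dist z ↑(2 * π * k₀ / a) ^ 2 ≤ 1 :=
    div_le_one_of_le₀ (pow_le_pow_left₀ (abs_nonneg _) him 2) (sq_nonneg _)
  have hc : a * |z.im| / (2 * π) ≤ 1 / 4 := by
    rw [div_le_iff₀ (by positivity)]
    calc a * |z.im| ≤ a * (π / (2 * a)) := mul_le_mul_of_nonneg_left (him.trans hz) ha.le
      _ = 1 / 4 * (2 * π) := by field_simp; ring
  calc |z.im| ^ 2 / dist z ↑(2 * π * k₀ / a) ^ 2
          + 2 * (a * |z.im| / (2 * π)) ^ 2 * ∑' k : ℕ, 1 / ((k : ℝ) + 1 - 1 / 4) ^ 2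
        ≤ 1 + 2 * (1 / 4) ^ 2 * 4 := by
        gcongr
        exact tsum_one_div_add_three_quarters_sq_le
    _ ≤ 2 := by norm_num
end

section
/- For every a > 0 and every λ, z ∈ ℂ, the reproducing kernels satisfy |ρ_{2a,λ}(z)| / ‖ρ_{a,λ}‖² ≤ c · e^{2a·|Im z|}, where c is an absolute constant and ρ_{b,λ}(z) = (1/π)·sin(b(z - conj λ))/(z - conj λ). -/
/-!
Put `w = z - conj λ` and `τ = |Im λ|`. From `|sin ζ|² = sin² (Re ζ) + sinh² (Im ζ)` one gets
`|sin ζ| ≤ min (1, |ζ|) e^{|Im ζ|}`, hence `|ρ_{2a,λ}(z)| ≤ π⁻¹ min (2a, 1/|w|) e^{2a|Im w|}` with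
`|Im w| ≤ |Im z| + τ`. The same identity gives `|ρ_{a,λ}(x)|²` on the real line explicitly, and
integrating it over a window of length `1/(2a)` (if `aτ ≤ 1`) or `τ` (if `aτ ≥ 1`) shows
`‖ρ_{a,λ}‖² ≳ a`, resp. `‖ρ_{a,λ}‖² ≳ e^{2aτ}/τ`; in each regime this dominates the upper bound.
-/

open MeasureTheory

/-- The reproducing kernel `ρ_{b,λ}(z) = (1/π)·sin(b(z - conj λ))/(z - conj λ)`. -/
noncomputable def rho (b : ℝ) (l z : ℂ) : ℂ :=
  (1/(Real.pi : ℂ)) * Complex.sin ((b : ℂ) * (z - (starRingEnd ℂ) l)) / (z - (starRingEnd ℂ) l)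

open Real ComplexConjugate

namespace Real

lemma cosh_le_exp_abs (y : ℝ) : cosh y ≤ exp |y| := by
  rw [← cosh_abs, cosh_eq]
  linarith [exp_le_exp.2 (neg_le_self (abs_nonneg y))]

lemma abs_sinh_le_abs_mul_exp_abs (y : ℝ) : |sinh y| ≤ |y| * exp |y| := by
  rw [abs_sinh, sinh_eq]
  have h : exp (-|y|) = exp |y| * exp (-2 * |y|) := by rw [← exp_add]; ring_nf
  nlinarith [add_one_le_exp (-2 * |y|), exp_pos |y|]

lemma exp_le_three_mul_sinh {s : ℝ} (hs : 1 ≤ s) : exp s ≤ 3 * sinh s := by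
  have h1 : exp s * exp (-s) = 1 := by rw [← exp_add, add_neg_cancel, exp_zero]
  have h3 : 3 ≤ exp s * exp s := by rw [← exp_add]; linarith [add_one_le_exp (s + s)]
  rw [sinh_eq]
  nlinarith [exp_pos s, exp_pos (-s)]

end Real

namespace Complex

lemma norm_sin_sq (z : ℂ) : ‖sin z‖ ^ 2 = Real.sin z.re ^ 2 + Real.sinh z.im ^ 2 := by
  rw [Complex.sq_norm, sin_eq, ← ofReal_sin, ← ofReal_cos, ← ofReal_sinh, ← ofReal_cosh,
    normSq_apply]
  simp only [add_re, add_im, mul_re, mul_im, ofReal_re, ofReal_im, I_re, I_im]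
  nlinarith [Real.sin_sq_add_cos_sq z.re, Real.cosh_sq z.im]

lemma norm_sin_le_exp_abs_im (z : ℂ) : ‖sin z‖ ≤ Real.exp |z.im| := by
  have h := Real.cosh_le_exp_abs z.im
  refine (pow_le_pow_iff_left₀ (norm_nonneg _) (exp_pos _).le two_ne_zero).1 ?_
  rw [norm_sin_sq]
  nlinarith [Real.sin_sq_le_one z.re, Real.cosh_sq z.im, Real.cosh_pos z.im]

lemma norm_sin_le_norm_mul_exp_abs_im (z : ℂ) : ‖sin z‖ ≤ ‖z‖ * Real.exp |z.im| := by
  have hsin : Real.sin z.re ^ 2 ≤ z.re ^ 2 := by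
    simpa only [sq_abs] using pow_le_pow_left₀ (abs_nonneg _) (Real.abs_sin_le_abs (x := z.re)) 2
  have hsinh : Real.sinh z.im ^ 2 ≤ z.im ^ 2 * Real.exp |z.im| ^ 2 := by
    simpa only [sq_abs, mul_pow] using
      pow_le_pow_left₀ (abs_nonneg _) (Real.abs_sinh_le_abs_mul_exp_abs z.im) 2
  refine (pow_le_pow_iff_left₀ (norm_nonneg _) (by positivity) two_ne_zero).1 ?_
  rw [norm_sin_sq, mul_pow, Complex.sq_norm, normSq_apply]
  have hexp : 1 ≤ Real.exp |z.im| ^ 2 := one_le_pow₀ (Real.one_le_exp (abs_nonneg _))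
  nlinarith [mul_le_mul_of_nonneg_left hexp (sq_nonneg z.re)]

lemma im_sub_conj (z w : ℂ) : (z - conj w).im = z.im + w.im := by simp

end Complex

lemma mul_sub_le_integral_of_le_on_Icc {f : ℝ → ℝ} (hf : Integrable f) (hf0 : 0 ≤ f)
    {c d m : ℝ} (hcd : c ≤ d) (hm : ∀ x ∈ Set.Icc c d, m ≤ f x) : m * (d - c) ≤ ∫ x, f x := by
  calc m * (d - c) = m * volume.real (Set.Icc c d) := by
        rw [Real.volume_real_Icc_of_le hcd]
    _ ≤ ∫ x in Set.Icc c d, f x :=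
        setIntegral_ge_of_const_le_real measurableSet_Icc measure_Icc_lt_top.ne hm hf.integrableOn
    _ ≤ ∫ x, f x := setIntegral_le_integral hf (Filter.Eventually.of_forall hf0)

lemma norm_rho (b : ℝ) (l z : ℂ) :
    ‖rho b l z‖ = ‖Complex.sin (b * (z - conj l))‖ / (π * ‖z - conj l‖) := by
  rw [rho, norm_div, norm_mul, norm_div, norm_one, Complex.norm_real, norm_of_nonneg pi_pos.le]
  field_simp

lemma norm_rho_le_mul_exp {b : ℝ} (hb : 0 ≤ b) (l z : ℂ) :
    ‖rho b l z‖ ≤ b / π * exp (b * |z.im + l.im|) := by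
  have hsin := Complex.norm_sin_le_norm_mul_exp_abs_im (b * (z - conj l))
  simp only [norm_mul, Complex.norm_real, norm_of_nonneg hb, Complex.mul_im, Complex.ofReal_re,
    Complex.ofReal_im, zero_mul, add_zero, Complex.im_sub_conj, abs_mul, abs_of_nonneg hb] at hsin
  rw [norm_rho]
  rcases (norm_nonneg (z - conj l)).eq_or_lt with hw | hw
  · rw [← hw, mul_zero, div_zero]; positivity
  · rw [div_le_iff₀ (by positivity)]
    calc _ ≤ b * ‖z - conj l‖ * exp (b * |z.im + l.im|) := hsin
      _ = _ := by field_simp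

lemma norm_rho_le_exp_div {b : ℝ} (hb : 0 ≤ b) (l z : ℂ) :
    ‖rho b l z‖ ≤ exp (b * |z.im + l.im|) / (π * ‖z - conj l‖) := by
  have hsin := Complex.norm_sin_le_exp_abs_im (b * (z - conj l))
  simp only [Complex.mul_im, Complex.ofReal_re, Complex.ofReal_im, zero_mul, add_zero,
    Complex.im_sub_conj, abs_mul, abs_of_nonneg hb] at hsin
  rw [norm_rho]
  gcongr

lemma measurable_rho (b : ℝ) (l : ℂ) : Measurable (rho b l) := by
  unfold rho; fun_prop

lemma integrable_norm_rho_sq {a : ℝ} (ha : 0 ≤ a) (l : ℂ) :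
    Integrable (fun x : ℝ => ‖rho a l x‖ ^ 2) := by
  set C := (1 + a ^ 2) * (exp (a * |l.im|) / π) ^ 2
  have hbound (x : ℝ) : ‖rho a l x‖ ^ 2 ≤ C * (1 + (x - l.re) ^ 2)⁻¹ := by
    have h1 := norm_rho_le_mul_exp ha l x
    have h2 := norm_rho_le_exp_div ha l x
    simp only [Complex.ofReal_im, zero_add] at h1 h2
    have hr : (x - l.re) ^ 2 ≤ ‖(x : ℂ) - conj l‖ ^ 2 := by
      simpa using pow_le_pow_left₀ (abs_nonneg _) (Complex.abs_re_le_norm ((x : ℂ) - conj l)) 2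
    have hr0 := norm_nonneg ((x : ℂ) - conj l)
    generalize ‖(x : ℂ) - conj l‖ = r at h2 hr hr0
    have h2' : ‖rho a l x‖ * r ≤ exp (a * |l.im|) / π := by
      rcases hr0.eq_or_lt with hw | hw
      · rw [← hw, mul_zero]; positivity
      · rwa [div_mul_eq_div_div, le_div_iff₀ hw] at h2
    rw [← div_eq_mul_inv, le_div_iff₀ (by positivity)]
    have h1' : ‖rho a l x‖ ≤ a * (exp (a * |l.im|) / π) := by
      rwa [div_mul_eq_mul_div, mul_div_assoc] at h1
    calc ‖rho a l x‖ ^ 2 * (1 + (x - l.re) ^ 2) ≤ ‖rho a l x‖ ^ 2 + (‖rho a l x‖ * r) ^ 2 := by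
          nlinarith [sq_nonneg ‖rho a l x‖]
      _ ≤ (a * (exp (a * |l.im|) / π)) ^ 2 + (exp (a * |l.im|) / π) ^ 2 := by
          gcongr
      _ = C := by ring
  have hmeas : Measurable fun x : ℝ => ‖rho a l x‖ ^ 2 :=
    ((measurable_rho a l).comp Complex.measurable_ofReal).norm.pow_const 2
  refine ((integrable_inv_one_add_sq.comp_sub_right l.re).const_mul C).mono'
    hmeas.aestronglyMeasurable (Filter.Eventually.of_forall fun x => ?_)
  rw [norm_pow, norm_norm]
  exact hbound x

lemma sq_norm_rho_ofReal (a : ℝ) (l : ℂ) (x : ℝ) :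
    ‖rho a l x‖ ^ 2 = (Real.sin (a * (x - l.re)) ^ 2 + Real.sinh (a * l.im) ^ 2) /
      (π ^ 2 * ((x - l.re) ^ 2 + l.im ^ 2)) := by
  rw [norm_rho, div_pow, mul_pow, Complex.norm_sin_sq, Complex.sq_norm, Complex.normSq_apply]
  simp only [Complex.mul_re, Complex.ofReal_re, Complex.sub_re, Complex.conj_re,
    Complex.ofReal_im, Complex.sub_im, Complex.conj_im, sub_neg_eq_add, zero_add, zero_mul,
    sub_zero, Complex.mul_im, add_zero]
  ring

lemma integral_norm_rho_sq_ge_of_mul_abs_im_le_one {a : ℝ} (ha : 0 < a) {l : ℂ}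
    (hl : a * |l.im| ≤ 1) : a / (4 * π ^ 4) ≤ ∫ x : ℝ, ‖rho a l x‖ ^ 2 := by
  have hpoint : ∀ x ∈ Set.Icc (l.re + 1 / (2 * a)) (l.re + 1 / a),
      a ^ 2 / (2 * π ^ 4) ≤ ‖rho a l x‖ ^ 2 := by
    rintro x ⟨hx1, hx2⟩
    have hs1 : 1 / 2 ≤ a * (x - l.re) := by
      rw [← le_sub_iff_add_le', div_le_iff₀ (by positivity)] at hx1; linarith
    have hs2 : a * (x - l.re) ≤ 1 := by
      rw [← sub_le_iff_le_add', le_div_iff₀ ha] at hx2; linarith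
    have hsin : 1 / π ≤ Real.sin (a * (x - l.re)) := by
      have := mul_le_sin (by linarith) (hs2.trans (by linarith [pi_gt_three]))
      calc 1 / π = 2 / π * (1 / 2) := by ring
        _ ≤ _ := by gcongr
        _ ≤ _ := this
    have hden : a ^ 2 * ((x - l.re) ^ 2 + l.im ^ 2) ≤ 2 := by
      have h1 : (a * (x - l.re)) ^ 2 ≤ 1 := by nlinarith
      have h2 : (a * |l.im|) ^ 2 ≤ 1 := by nlinarith [mul_nonneg ha.le (abs_nonneg l.im)]
      calc _ = (a * (x - l.re)) ^ 2 + (a * |l.im|) ^ 2 := by rw [mul_pow _ |l.im|, sq_abs]; ring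
        _ ≤ 2 := by linarith
    have hxpos : 0 < x - l.re := pos_of_mul_pos_right (by linarith) ha.le
    rw [sq_norm_rho_ofReal, le_div_iff₀ (by positivity)]
    calc a ^ 2 / (2 * π ^ 4) * (π ^ 2 * ((x - l.re) ^ 2 + l.im ^ 2))
        = a ^ 2 * ((x - l.re) ^ 2 + l.im ^ 2) / (2 * π ^ 2) := by field_simp
      _ ≤ 2 / (2 * π ^ 2) := by gcongr
      _ = (1 / π) ^ 2 := by ring
      _ ≤ Real.sin (a * (x - l.re)) ^ 2 := by gcongr
      _ ≤ _ := le_add_of_nonneg_right (sq_nonneg _)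
  have := mul_sub_le_integral_of_le_on_Icc (integrable_norm_rho_sq ha.le l) (fun x => sq_nonneg _)
    (by gcongr; linarith) hpoint
  convert this using 1
  field_simp
  ring

lemma integral_norm_rho_sq_ge_of_one_le_mul_abs_im {a : ℝ} {l : ℂ} (hl : 1 ≤ a * |l.im|) :
    exp (2 * a * |l.im|) / (18 * π ^ 2 * |l.im|) ≤ ∫ x : ℝ, ‖rho a l x‖ ^ 2 := by
  have ha : 0 < a := pos_of_mul_pos_left (one_pos.trans_le hl) (abs_nonneg _)
  have hτ : 0 < |l.im| := pos_of_mul_pos_right (one_pos.trans_le hl) ha.le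
  have hsinh : exp (2 * a * |l.im|) / 9 ≤ Real.sinh (a * l.im) ^ 2 := by
    rw [← sq_abs, Real.abs_sinh, abs_mul, abs_of_pos ha, div_le_iff₀ (by norm_num)]
    calc exp (2 * a * |l.im|) = exp (a * |l.im|) ^ 2 := by rw [← exp_nat_mul]; ring_nf
      _ ≤ (3 * Real.sinh (a * |l.im|)) ^ 2 := by
        gcongr
        exact Real.exp_le_three_mul_sinh hl
      _ = _ := by ring
  have hpoint : ∀ x ∈ Set.Icc l.re (l.re + |l.im|),
      exp (2 * a * |l.im|) / (18 * π ^ 2 * |l.im| ^ 2) ≤ ‖rho a l x‖ ^ 2 := by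
    rintro x ⟨hx1, hx2⟩
    have hden : (x - l.re) ^ 2 + l.im ^ 2 ≤ 2 * |l.im| ^ 2 := by
      nlinarith [sq_abs l.im]
    rw [sq_norm_rho_ofReal]
    calc exp (2 * a * |l.im|) / (18 * π ^ 2 * |l.im| ^ 2)
        = exp (2 * a * |l.im|) / 9 / (π ^ 2 * (2 * |l.im| ^ 2)) := by ring
      _ ≤ Real.sinh (a * l.im) ^ 2 / (π ^ 2 * ((x - l.re) ^ 2 + l.im ^ 2)) := by
        have : 0 < l.im ^ 2 := by rw [← sq_abs]; positivity
        gcongr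
      _ ≤ _ := by gcongr; exact le_add_of_nonneg_left (sq_nonneg _)
  have := mul_sub_le_integral_of_le_on_Icc (integrable_norm_rho_sq ha.le l) (fun x => sq_nonneg _)
    (by linarith) hpoint
  convert this using 1
  field_simp
  ring

lemma norm_rho_le_mul_exp_mul_exp {b : ℝ} (hb : 0 ≤ b) (l z : ℂ) :
    ‖rho b l z‖ ≤ b / π * exp (b * |l.im|) * exp (b * |z.im|) := by
  calc ‖rho b l z‖ ≤ b / π * exp (b * |z.im + l.im|) := norm_rho_le_mul_exp hb l z
    _ ≤ b / π * exp (b * (|l.im| + |z.im|)) := by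
        gcongr
        linarith [abs_add_le z.im l.im]
    _ = _ := by rw [mul_add, exp_add, mul_assoc]

lemma norm_rho_le_div_mul_exp_mul_exp {b : ℝ} (hb : 0 ≤ b) {l : ℂ} (hl : l.im ≠ 0) (z : ℂ) :
    ‖rho b l z‖ ≤ 2 / (π * |l.im|) * exp (b * |l.im|) * exp (b * |z.im|) := by
  have hτ : 0 < |l.im| := abs_pos.2 hl
  rcases le_or_gt (|l.im| / 2) ‖z - conj l‖ with hw | hw
  · calc ‖rho b l z‖ ≤ exp (b * |z.im + l.im|) / (π * ‖z - conj l‖) := norm_rho_le_exp_div hb l z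
      _ ≤ exp (b * (|l.im| + |z.im|)) / (π * (|l.im| / 2)) := by
          gcongr
          linarith [abs_add_le z.im l.im]
      _ = _ := by rw [mul_add, exp_add]; field_simp
  · -- `z` is so close to `conj l` that `|Im z| > |Im l| / 2 > |Im (z - conj l)|`.
    have him : |z.im + l.im| < |l.im| / 2 := by
      rw [← Complex.im_sub_conj]; exact (Complex.abs_im_le_norm _).trans_lt hw
    have hz : |z.im + l.im| ≤ |z.im| := by
      have := abs_sub (z.im + l.im) z.im
      rw [add_sub_cancel_left] at this
      linarith
    have hbτ : b ≤ 2 / |l.im| * exp (b * |l.im|) := by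
      rw [div_mul_eq_mul_div, le_div_iff₀ hτ]
      nlinarith [add_one_le_exp (b * |l.im|), mul_nonneg hb hτ.le]
    calc ‖rho b l z‖ ≤ b / π * exp (b * |z.im + l.im|) := norm_rho_le_mul_exp hb l z
      _ ≤ 2 / |l.im| * exp (b * |l.im|) / π * exp (b * |z.im|) := by gcongr
      _ = _ := by field_simp

/-- There is an absolute constant `c` such that for every `a > 0` and all `λ, z ∈ ℂ`,
`|ρ_{2a,λ}(z)| ≤ c·e^{2a|Im z|}·‖ρ_{a,λ}‖²`, where `‖ρ_{a,λ}‖² = ∫_ℝ |ρ_{a,λ}(x)|² dx`. -/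
theorem stmt_6 :
    ∃ c : ℝ, 0 < c ∧ ∀ (a : ℝ), 0 < a → ∀ (l z : ℂ),
      ‖rho (2*a) l z‖ ≤ c * Real.exp (2*a*|z.im|) * ∫ x : ℝ, ‖rho a l x‖^2 := by
  refine ⟨8 * π ^ 3 * exp 2, by positivity, fun a ha l z => ?_⟩
  rcases le_or_gt (a * |l.im|) 1 with hl | hl
  · calc ‖rho (2 * a) l z‖ ≤ 2 * a / π * exp (2 * a * |l.im|) * exp (2 * a * |z.im|) :=
          norm_rho_le_mul_exp_mul_exp (by positivity) l z
      _ ≤ 2 * a / π * exp 2 * exp (2 * a * |z.im|) := by gcongr; linarith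
      _ = 8 * π ^ 3 * exp 2 * exp (2 * a * |z.im|) * (a / (4 * π ^ 4)) := by
          field_simp; ring
      _ ≤ _ := by gcongr; exact integral_norm_rho_sq_ge_of_mul_abs_im_le_one ha hl
  · have hl0 : l.im ≠ 0 := abs_pos.1 (pos_of_mul_pos_right (one_pos.trans hl) ha.le)
    have hI := integral_norm_rho_sq_ge_of_one_le_mul_abs_im hl.le
    have hc : 36 * π ≤ 8 * π ^ 3 * exp 2 := by
      have : 36 ≤ 8 * π ^ 2 * exp 2 := by nlinarith [pi_gt_three, one_le_exp zero_le_two]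
      nlinarith [pi_pos]
    calc ‖rho (2 * a) l z‖ ≤ 2 / (π * |l.im|) * exp (2 * a * |l.im|) * exp (2 * a * |z.im|) :=
          norm_rho_le_div_mul_exp_mul_exp (by positivity) hl0 z
      _ = 36 * π * exp (2 * a * |z.im|) * (exp (2 * a * |l.im|) / (18 * π ^ 2 * |l.im|)) := by
          field_simp; ring
      _ ≤ _ := by gcongr
end

section
/- Let a > 0, let I ⊂ ℝ be an interval whose endpoints lie in Z_a = {2πk/a : k ∈ ℤ} with length |I| ≥ 2π/a, let λ ∈ ℂ, let x₀ be a nearest point to λ in Z_a, and let I' = I \ {x : |x - Re λ| < π/a}. Then (1/μ_a(I))·∫_I dμ_a(x)/|x - conj λ| ≤ μ_a({x₀})/(μ_a(I)·|x₀ - conj λ|) + C/|I| · ∫_{π/a}^{|I|} dx/√(x² + (Im λ)²) for a universal constant C, where μ_a = (2π/a)·Σ_{x∈Z_a} δ_x. -/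
/-
Write `c = 2π/a`, `I = [c k₁, c (k₁ + N)]` and `x₀ = c k₀`. Then `μ_a(I) = c (N + 1)`, and
`∫_I dμ_a/|x - conj λ|` is `c` times the sum over `k₁ ≤ k ≤ k₁ + N` of
`1/√((c k - Re λ)² + (Im λ)²)`. As `x₀` is a nearest lattice point, `|c k - Re λ| ≥ c |k - k₀| / 2`,
so every term with `k ≠ k₀` is at most `2 G (k - k₀)` with `G u = 1/√((c u)² + (Im λ)²)`. Since `G`
is even and decreasing in `|u|`, these terms sum to at most `4 (G 1 + ⋯ + G (N + 1))`, and comparing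
this sum with an integral bounds it by `16 ∫_{1/2}^N G = (16/c) ∫_{π/a}^{|I|} dx/√(x² + (Im λ)²)`.
Dividing by `μ_a(I)` gives `C = 16`.
-/

open MeasureTheory

/-- The normalized counting measure `μ_a = (2π/a)·Σ_{x ∈ Z_a} δ_x` on the lattice
`Z_a = {2πk/a : k ∈ ℤ}`. -/
noncomputable def latticeMeasure (a : ℝ) : Measure ℝ :=
  ENNReal.ofReal (2*Real.pi/a) • Measure.sum (fun k : ℤ => Measure.dirac ((2*Real.pi/a) * k))

open Real Finset ComplexConjugate

noncomputable def invHypot (b x : ℝ) : ℝ := (√(x ^ 2 + b ^ 2))⁻¹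

lemma invHypot_nonneg (b x : ℝ) : 0 ≤ invHypot b x := by
  unfold invHypot; positivity

lemma invHypot_even (b : ℝ) : Function.Even (invHypot b) := fun x => by
  simp [invHypot]

lemma invHypot_antitoneOn (b : ℝ) : AntitoneOn (invHypot b) (Set.Ioi 0) := by
  intro x hx y hy hxy
  have hx : 0 < x := hx
  unfold invHypot
  gcongr

lemma inv_norm_ofReal_sub_conj (x : ℝ) (l : ℂ) :
    ‖(x : ℂ) - conj l‖⁻¹ = invHypot l.im (x - l.re) := by
  rw [invHypot, ← dist_eq_norm, Complex.dist_eq_re_im]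
  simp

lemma abs_sub_re_le_of_dist_le {l : ℂ} {x y : ℝ} (h : dist l x ≤ dist l y) :
    |x - l.re| ≤ |y - l.re| := by
  rw [Complex.dist_eq_re_im, Complex.dist_eq_re_im] at h
  simp only [Complex.ofReal_re, Complex.ofReal_im, sub_zero] at h
  have h2 := (Real.sqrt_le_sqrt_iff (by positivity)).1 h
  rw [← sq_le_sq]
  nlinarith

-- Since `x₀` is at least as close to `t` as `x` is, `|x - x₀| ≤ 2 |x - t|`.
lemma invHypot_sub_le_two_mul {b t x x₀ : ℝ} (hx : x ≠ x₀) (h : |x₀ - t| ≤ |x - t|) :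
    invHypot b (x - t) ≤ 2 * invHypot b (x - x₀) := by
  have hdist : |x - x₀| ≤ 2 * |x - t| := by
    calc |x - x₀| = |(x - t) - (x₀ - t)| := by ring_nf
      _ ≤ |x - t| + |x₀ - t| := abs_sub _ _
      _ ≤ 2 * |x - t| := by linarith
  have hpos : 0 < √((x - x₀) ^ 2 + b ^ 2) := by
    have : 0 < (x - x₀) ^ 2 := by positivity [sub_ne_zero.2 hx]
    positivity
  have hsq : (x - x₀) ^ 2 + b ^ 2 ≤ (2 * √((x - t) ^ 2 + b ^ 2)) ^ 2 := by
    rw [mul_pow, Real.sq_sqrt (by positivity)]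
    nlinarith [sq_abs (x - x₀), sq_abs (x - t), abs_nonneg (x - x₀), sq_nonneg b]
  have hle : √((x - x₀) ^ 2 + b ^ 2) ≤ 2 * √((x - t) ^ 2 + b ^ 2) :=
    Real.sqrt_le_iff.2 ⟨by positivity, hsq⟩
  unfold invHypot
  calc (√((x - t) ^ 2 + b ^ 2))⁻¹ = 2 * (2 * √((x - t) ^ 2 + b ^ 2))⁻¹ := by
        rw [mul_inv, ← mul_assoc]; norm_num
    _ ≤ 2 * (√((x - x₀) ^ 2 + b ^ 2))⁻¹ := by gcongr

section AntitoneSums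

variable {G : ℝ → ℝ}

lemma sum_Icc_le_sum_range_of_antitoneOn (hG0 : ∀ u, 0 ≤ G u) (hG : AntitoneOn G (Set.Ici 1))
    {p q : ℤ} (L : ℕ) (hp : 1 ≤ p) (hq : q ≤ p + L) :
    ∑ j ∈ Icc p q, G j ≤ ∑ i ∈ range (L + 1), G (i + 1) := by
  have hcast : ∀ j ∈ Icc p q, (((j - p).toNat : ℕ) : ℝ) = j - p := fun j hj => by
    rw [mem_Icc] at hj
    exact_mod_cast Int.toNat_of_nonneg (by omega : 0 ≤ j - p)
  calc ∑ j ∈ Icc p q, G j ≤ ∑ j ∈ Icc p q, G ((j - p).toNat + 1) := by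
        refine sum_le_sum fun j hj => ?_
        have hp' : (1 : ℝ) ≤ p := by exact_mod_cast hp
        have hpj : (p : ℝ) ≤ j := by exact_mod_cast (mem_Icc.1 hj).1
        rw [hcast j hj]
        exact hG (by simp only [Set.mem_Ici]; linarith) (by simp only [Set.mem_Ici]; linarith)
          (by linarith)
    _ = ∑ i ∈ (Icc p q).image (fun j => (j - p).toNat), G (i + 1) := by
        rw [sum_image fun i hi j hj hij => ?_]
        simp only [mem_coe, mem_Icc] at hi hj
        omega
    _ ≤ ∑ i ∈ range (L + 1), G (i + 1) := by
        refine sum_le_sum_of_subset_of_nonneg (fun i hi => ?_) fun i _ _ => hG0 _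
        simp only [mem_image, mem_Icc, mem_range] at hi ⊢
        omega

lemma sum_Icc_erase_zero_le_of_even (hG0 : ∀ u, 0 ≤ G u) (hGeven : Function.Even G)
    (hG : AntitoneOn G (Set.Ici 1)) {p q : ℤ} (L : ℕ) (hq : q ≤ p + L) :
    ∑ j ∈ (Icc p q).erase 0, G j ≤ 2 * ∑ i ∈ range (L + 1), G (i + 1) := by
  have hsplit : (Icc p q).erase 0 = Icc (max p 1) q ∪ Icc p (min q (-1)) := by
    ext j
    simp only [mem_erase, mem_Icc, mem_union]
    omega
  have hdisj : Disjoint (Icc (max p 1) q) (Icc p (min q (-1))) := by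
    rw [disjoint_left]
    intro j hj hj'
    rw [mem_Icc] at hj hj'
    omega
  have hneg : ∑ j ∈ Icc p (min q (-1)), G j = ∑ j ∈ Icc (-min q (-1)) (-p), G j := by
    refine sum_nbij' (fun j => -j) (fun j => -j) ?_ ?_ (fun j _ => neg_neg j)
      (fun j _ => neg_neg j) fun j _ => ?_
    · intro j hj; simp only [mem_Icc] at hj ⊢; omega
    · intro j hj; simp only [mem_Icc] at hj ⊢; omega
    · rw [Int.cast_neg, hGeven]
  rw [hsplit, sum_union hdisj, hneg, two_mul]
  gcongr
  · exact sum_Icc_le_sum_range_of_antitoneOn hG0 hG L (le_max_right _ _) (by omega)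
  · exact sum_Icc_le_sum_range_of_antitoneOn hG0 hG L (by omega) (by omega)

lemma sum_range_le_four_mul_integral (hG0 : ∀ u, 0 ≤ G u)
    (hG : AntitoneOn G (Set.Ici (1 / 2))) {N : ℕ} (hN : 1 ≤ N) :
    ∑ i ∈ range (N + 1), G (i + 1) ≤ 4 * ∫ u in (1 / 2)..N, G u := by
  have hN' : (1 : ℝ) ≤ N := by exact_mod_cast hN
  have hint : ∀ x y : ℝ, 1 / 2 ≤ x → 1 / 2 ≤ y → IntervalIntegrable G volume x y :=
    fun x y hx hy => (hG.mono fun u hu => le_trans (le_min hx hy) hu.1).intervalIntegrable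
  have hhead : G 1 ≤ 2 * ∫ u in (1 / 2)..1, G u := by
    have := intervalIntegral.integral_mono_on (by norm_num : (1 / 2 : ℝ) ≤ 1)
      intervalIntegrable_const (hint _ _ (by norm_num) (by norm_num))
      fun u hu => hG (Set.mem_Ici.2 hu.1) (by simp only [Set.mem_Ici]; norm_num) hu.2
    simp only [intervalIntegral.integral_const, smul_eq_mul] at this
    linarith
  have hmiddle : ∑ i ∈ Ico 1 N, G ↑(i + 1) ≤ ∫ u in (1 : ℝ)..N, G u := by
    simpa using (hG.mono fun u hu => le_trans (by norm_num) hu.1).sum_le_integral_Ico hN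
  have hlast : G (N + 1) ≤ G 1 :=
    hG (by simp only [Set.mem_Ici]; norm_num) (by simp only [Set.mem_Ici]; linarith) (by linarith)
  have htail : 0 ≤ ∫ u in (1 : ℝ)..N, G u :=
    intervalIntegral.integral_nonneg hN' fun u _ => hG0 u
  have hdecomp :
      ∑ i ∈ range (N + 1), G (i + 1) = G 1 + ∑ i ∈ Ico 1 N, G ↑(i + 1) + G (N + 1) := by
    rw [sum_range_succ, range_eq_Ico, sum_eq_sum_Ico_succ_bot (by omega)]
    push_cast
    ring_nf
  rw [hdecomp, ← intervalIntegral.integral_add_adjacent_intervals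
    (hint (1 / 2) 1 (by norm_num) (by norm_num)) (hint 1 N (by norm_num) (by linarith))]
  linarith

end AntitoneSums

lemma sum_invHypot_lattice_le {c t b : ℝ} (hc : 0 < c) {k₀ : ℤ}
    (hk₀ : ∀ k : ℤ, |c * k₀ - t| ≤ |c * k - t|) (k₁ : ℤ) {N : ℕ} (hN : 1 ≤ N) :
    ∑ k ∈ Icc k₁ (k₁ + N), invHypot b (c * k - t)
      ≤ invHypot b (c * k₀ - t) + 16 * ∫ u in (1 / 2)..N, invHypot b (c * u) := by
  set G : ℝ → ℝ := fun u => invHypot b (c * u)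
  have hG0 : ∀ u, 0 ≤ G u := fun u => invHypot_nonneg b _
  have hGeven : Function.Even G := fun u => by simp only [G, mul_neg, invHypot_even b _]
  have hG : AntitoneOn G (Set.Ioi 0) := fun u hu v hv huv =>
    invHypot_antitoneOn b (mul_pos hc hu) (mul_pos hc hv) (by gcongr)
  have hG₁ : AntitoneOn G (Set.Ici 1) := hG.mono fun u hu => by
    simp only [Set.mem_Ici, Set.mem_Ioi] at hu ⊢; linarith
  have hG₂ : AntitoneOn G (Set.Ici (1 / 2)) := hG.mono fun u hu => by
    simp only [Set.mem_Ici, Set.mem_Ioi] at hu ⊢; linarith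
  have hpoint : ∀ k ≠ k₀, invHypot b (c * k - t) ≤ 2 * G ((k - k₀ : ℤ) : ℝ) := fun k hk => by
    have hne : c * k ≠ c * k₀ := by
      rw [Ne, mul_right_inj' hc.ne']
      exact_mod_cast hk
    simpa only [G, Int.cast_sub, mul_sub] using invHypot_sub_le_two_mul (b := b) hne (hk₀ k)
  have hshift : ∑ k ∈ (Icc k₁ (k₁ + N)).erase k₀, G ((k - k₀ : ℤ) : ℝ)
      = ∑ j ∈ (Icc (k₁ - k₀) (k₁ + N - k₀)).erase 0, G j := by
    refine sum_nbij' (· - k₀) (· + k₀) ?_ ?_ (fun k _ => sub_add_cancel k k₀)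
      (fun j _ => add_sub_cancel_right j k₀) fun k _ => rfl
    · intro k hk; simp only [mem_erase, mem_Icc] at hk ⊢; omega
    · intro j hj; simp only [mem_erase, mem_Icc] at hj ⊢; omega
  calc ∑ k ∈ Icc k₁ (k₁ + N), invHypot b (c * k - t)
      ≤ ∑ k ∈ insert k₀ ((Icc k₁ (k₁ + N)).erase k₀), invHypot b (c * k - t) :=
        sum_le_sum_of_subset_of_nonneg (insert_erase_subset _ _) fun _ _ _ => invHypot_nonneg _ _
    _ = invHypot b (c * k₀ - t) + ∑ k ∈ (Icc k₁ (k₁ + N)).erase k₀, invHypot b (c * k - t) :=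
        sum_insert (notMem_erase _ _)
    _ ≤ invHypot b (c * k₀ - t) + 2 * ∑ j ∈ (Icc (k₁ - k₀) (k₁ + N - k₀)).erase 0, G j := by
        rw [← hshift, mul_sum]
        gcongr with k hk
        exact hpoint k (ne_of_mem_erase hk)
    _ ≤ invHypot b (c * k₀ - t) + 2 * (2 * (4 * ∫ u in (1 / 2)..N, G u)) := by
        have hsum := sum_Icc_erase_zero_le_of_even hG0 hGeven hG₁
          (p := k₁ - k₀) (q := k₁ + N - k₀) N (by omega)
        linarith [sum_range_le_four_mul_integral hG0 hG₂ hN]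
    _ = invHypot b (c * k₀ - t) + 16 * ∫ u in (1 / 2)..N, invHypot b (c * u) := by ring

section LatticeMeasure

variable {a : ℝ}

lemma latticeMeasure_restrict_Icc (ha : 0 < a) (k₁ k₂ : ℤ) :
    (latticeMeasure a).restrict (Set.Icc (2 * π / a * k₁) (2 * π / a * k₂))
      = ENNReal.ofReal (2 * π / a) • ∑ k ∈ Icc k₁ k₂, Measure.dirac (2 * π / a * k) := by
  have hc : 0 < 2 * π / a := by positivity
  have hmem : ∀ k : ℤ, 2 * π / a * k ∈ Set.Icc (2 * π / a * k₁) (2 * π / a * k₂) ↔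
      k ∈ Icc k₁ k₂ := fun k => by
    simp only [Set.mem_Icc, mem_Icc, mul_le_mul_iff_right₀ hc, Int.cast_le]
  rw [latticeMeasure, Measure.restrict_smul, Measure.restrict_sum _ measurableSet_Icc]
  congr 1
  ext s hs
  rw [Measure.sum_apply _ hs, Measure.finsetSum_apply, tsum_eq_sum (s := Icc k₁ k₂)]
  · refine sum_congr rfl fun k hk => ?_
    rw [restrict_dirac, if_pos ((hmem k).2 hk)]
  · intro k hk
    rw [restrict_dirac, if_neg (mt (hmem k).1 hk)]
    rfl

lemma setIntegral_latticeMeasure_Icc {E : Type*} [NormedAddCommGroup E] [NormedSpace ℝ E]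
    [CompleteSpace E] (ha : 0 < a) (f : ℝ → E) (k₁ k₂ : ℤ) :
    ∫ x in Set.Icc (2 * π / a * k₁) (2 * π / a * k₂), f x ∂latticeMeasure a
      = (2 * π / a) • ∑ k ∈ Icc k₁ k₂, f (2 * π / a * k) := by
  rw [latticeMeasure_restrict_Icc ha, integral_smul_measure,
    integral_finsetSum_measure fun k _ => integrable_dirac enorm_lt_top,
    ENNReal.toReal_ofReal (by positivity)]
  simp only [integral_dirac]

lemma latticeMeasure_real_Icc (ha : 0 < a) (k : ℤ) (N : ℕ) :
    (latticeMeasure a).real (Set.Icc (2 * π / a * k) (2 * π / a * (k + N : ℤ)))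
      = 2 * π / a * (N + 1) := by
  simpa [Int.card_Icc, show (k + N + 1 - k).toNat = N + 1 by omega]
    using setIntegral_latticeMeasure_Icc ha (fun _ => (1 : ℝ)) k (k + N)

lemma latticeMeasure_real_singleton (ha : 0 < a) (k : ℤ) :
    (latticeMeasure a).real {2 * π / a * k} = 2 * π / a := by
  simpa using latticeMeasure_real_Icc ha k 0

lemma setIntegral_invHypot_latticeMeasure_le (ha : 0 < a) {t b : ℝ} {k₀ : ℤ}
    (hk₀ : ∀ k : ℤ, |2 * π / a * k₀ - t| ≤ |2 * π / a * k - t|) (k₁ : ℤ) {N : ℕ} (hN : 1 ≤ N) :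
    ∫ x in Set.Icc (2 * π / a * k₁) (2 * π / a * (k₁ + N : ℤ)), invHypot b (x - t) ∂latticeMeasure a
      ≤ 2 * π / a * invHypot b (2 * π / a * k₀ - t)
        + 16 * ∫ x in (π / a)..(2 * π / a * N), invHypot b x := by
  have hc : 0 < 2 * π / a := by positivity
  rw [setIntegral_latticeMeasure_Icc ha, smul_eq_mul,
    show π / a = 2 * π / a * (1 / 2) by ring, ← intervalIntegral.smul_integral_comp_mul_left,
    smul_eq_mul]
  nlinarith [sum_invHypot_lattice_le (b := b) hc hk₀ k₁ hN]

end LatticeMeasure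

/-- Let `a > 0`, let `I = [α,β]` be an interval with endpoints in `Z_a` and length
`|I| = β - α ≥ 2π/a`, let `λ ∈ ℂ`, and let `x₀` be a nearest point of `Z_a` to `λ`.  Then
`(1/μ_a(I))·∫_I dμ_a(x)/|x - conj λ|
  ≤ μ_a({x₀})/(μ_a(I)·|x₀ - conj λ|) + (C/|I|)·∫_{π/a}^{|I|} dx/√(x² + (Im λ)²)`
for a universal constant `C`. -/
theorem stmt_16 :
    ∃ C : ℝ, 0 < C ∧ ∀ (a α β : ℝ) (l : ℂ) (x₀ : ℝ), 0 < a →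
      (∃ k : ℤ, α = 2*Real.pi*k/a) → (∃ k : ℤ, β = 2*Real.pi*k/a) →
      2*Real.pi/a ≤ β - α →
      (∃ k : ℤ, x₀ = 2*Real.pi*k/a) →
      (∀ k : ℤ, dist l ((x₀ : ℝ) : ℂ) ≤ dist l (((2*Real.pi*(k:ℝ)/a : ℝ)) : ℂ)) →
      ((latticeMeasure a (Set.Icc α β)).toReal)⁻¹
          * (∫ x in Set.Icc α β, ‖(x:ℂ) - (starRingEnd ℂ) l‖⁻¹ ∂(latticeMeasure a))
        ≤ (latticeMeasure a {x₀}).toReal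
            / ((latticeMeasure a (Set.Icc α β)).toReal * ‖((x₀ : ℝ) : ℂ) - (starRingEnd ℂ) l‖)
          + C/(β - α) * (∫ x in (Real.pi/a)..(β - α), (Real.sqrt (x^2 + l.im^2))⁻¹) := by
  refine ⟨16, by norm_num, ?_⟩
  rintro a α β l x₀ ha ⟨k₁, rfl⟩ ⟨k₂, rfl⟩ hlen ⟨k₀, rfl⟩ hnearest
  simp only [mul_div_right_comm (2 * π)] at hlen hnearest ⊢
  have hc : 0 < 2 * π / a := by positivity
  have hk : (1 : ℝ) ≤ k₂ - k₁ := le_of_mul_le_mul_left (by linarith) hc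
  obtain ⟨N, rfl⟩ := Int.le.dest (by exact_mod_cast (by linarith : (k₁ : ℝ) ≤ k₂))
  have hN : (1 : ℝ) ≤ N := by push_cast at hk; linarith
  have hlength : 2 * π / a * ↑(k₁ + N : ℤ) - 2 * π / a * k₁ = 2 * π / a * N := by
    push_cast; ring
  have hint := setIntegral_invHypot_latticeMeasure_le ha (b := l.im)
    (fun k => abs_sub_re_le_of_dist_le (hnearest k)) k₁ (Nat.one_le_cast.1 hN)
  have hK : 0 ≤ ∫ x in (π / a)..(2 * π / a * N), invHypot l.im x :=
    intervalIntegral.integral_nonneg (by rw [mul_div_assoc]; nlinarith [div_pos pi_pos ha])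
      fun x _ => invHypot_nonneg _ _
  simp only [← measureReal_def]
  rw [← inv_inv ‖((2 * π / a * k₀ : ℝ) : ℂ) - conj l‖, latticeMeasure_real_Icc ha,
    latticeMeasure_real_singleton ha, hlength,
    div_mul_eq_div_div (2 * π / a) (2 * π / a * (N + 1)), div_inv_eq_mul]
  simp only [inv_norm_ofReal_sub_conj, ← invHypot.eq_1]
  calc (2 * π / a * (N + 1))⁻¹ * ∫ x in _, invHypot l.im (x - l.re) ∂latticeMeasure a
      ≤ (2 * π / a * (N + 1))⁻¹ * (2 * π / a * invHypot l.im (2 * π / a * k₀ - l.re)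
        + 16 * ∫ x in (π / a)..(2 * π / a * N), invHypot l.im x) := by gcongr
    _ = 2 * π / a / (2 * π / a * (N + 1)) * invHypot l.im (2 * π / a * k₀ - l.re)
        + 16 / (2 * π / a * (N + 1)) * ∫ x in (π / a)..(2 * π / a * N), invHypot l.im x := by
      ring
    _ ≤ _ := by gcongr; linarith
end

section
/- Let a > 0 and λ ∈ ℂ with Im λ ≥ 2π/a. The rank-one integral operator K on L²(μ_a) with kernel K(x,t) = -Im λ/((x - conj λ)(t - conj λ)), i.e. K f(x) = -Im λ/(x - conj λ) · ∫ f(t)/(t - conj λ) dμ_a(t), has operator norm ‖K‖ = Im λ · ‖1/(x - conj λ)‖²_{L²(μ_a)} ≤ C for a universal constant C independent of λ and a. -/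
/-!
Writing `δ = 2π/a`, `s = Im λ / δ ≥ 1` and `x = Re λ / δ`, the quantity is
`∑_{k ∈ ℤ} s / ((k - x)² + s²)`, a Riemann sum of the Poisson-type kernel `s / (t² + s²)`.
Shifting `k` by `⌈x⌉` and folding `ℤ` onto `ℕ`, evenness and monotonicity on `[0, ∞)` bound it by
`2 ∑_{m ∈ ℕ} s / (m² + s²)`, and `s / (m² + s²) ≤ 2s / (m + s)²` telescopes against
`2s / (m + s - 1/2)`, so the whole sum is at most `8`.
-/

open Finset ComplexConjugate

theorem Complex.sq_norm_ofReal_sub_conj (y : ℝ) (z : ℂ) :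
    ‖(y : ℂ) - conj z‖ ^ 2 = (y - z.re) ^ 2 + z.im ^ 2 := by
  rw [Complex.sq_norm, Complex.normSq_apply]
  simp only [Complex.sub_re, Complex.sub_im, Complex.ofReal_re, Complex.ofReal_im,
    Complex.conj_re, Complex.conj_im]
  ring

theorem tsum_int_comp_sub_le_two_mul_tsum_nat {g : ℝ → ℝ} (hg_nonneg : ∀ t, 0 ≤ g t)
    (hg_even : g.Even) (hg_anti : AntitoneOn g (Set.Ici 0))
    (hg_sum : Summable fun m : ℕ => g m) (x : ℝ) :
    ∑' k : ℤ, g (k - x) ≤ 2 * ∑' m : ℕ, g m := by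
  set n := ⌈x⌉
  have h_right : ∀ m : ℕ, g (((n + m : ℤ) : ℝ) - x) ≤ g m := fun m => by
    have : (0 : ℝ) ≤ n - x := sub_nonneg.mpr (Int.le_ceil x)
    exact hg_anti (Set.mem_Ici.mpr m.cast_nonneg) (Set.mem_Ici.mpr (by push_cast; linarith))
      (by push_cast; linarith)
  have h_left : ∀ m : ℕ, g (((n + -(m + 1 : ℤ) : ℤ) : ℝ) - x) ≤ g m := fun m => by
    have : (0 : ℝ) < x + 1 - n := by linarith [Int.ceil_lt_add_one x]
    rw [← hg_even]
    exact hg_anti (Set.mem_Ici.mpr m.cast_nonneg) (Set.mem_Ici.mpr (by push_cast; linarith))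
      (by push_cast; linarith)
  have h_sum_right := hg_sum.of_nonneg_of_le (fun m => hg_nonneg _) h_right
  have h_sum_left := hg_sum.of_nonneg_of_le (fun m => hg_nonneg _) h_left
  calc ∑' k : ℤ, g (k - x) = ∑' j : ℤ, g (((n + j : ℤ) : ℝ) - x) :=
        ((Equiv.addLeft n).tsum_eq fun k : ℤ => g (k - x)).symm
    _ = ∑' m : ℕ, g (((n + m : ℤ) : ℝ) - x) + ∑' m : ℕ, g (((n + -(m + 1 : ℤ) : ℤ) : ℝ) - x) :=
        tsum_of_nat_of_neg_add_one h_sum_right h_sum_left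
    _ ≤ ∑' m : ℕ, g m + ∑' m : ℕ, g m :=
        add_le_add (h_sum_right.tsum_le_tsum h_right hg_sum)
          (h_sum_left.tsum_le_tsum h_left hg_sum)
    _ = 2 * ∑' m : ℕ, g m := by ring

theorem div_natCast_sq_add_sq_le_sub {s : ℝ} (hs : 1 ≤ s) (m : ℕ) :
    s / ((m : ℝ) ^ 2 + s ^ 2) ≤ 2 * s / (m + s - 1 / 2) - 2 * s / (m + 1 + s - 1 / 2) := by
  have hm : (0 : ℝ) ≤ m := m.cast_nonneg
  have h₁ : (0 : ℝ) < m + s - 1 / 2 := by linarith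
  rw [div_sub_div _ _ h₁.ne' (by linarith),
    div_le_div_iff₀ (by positivity) (mul_pos h₁ (by linarith))]
  nlinarith [sq_nonneg ((m : ℝ) - s)]

theorem sum_range_div_natCast_sq_add_sq_le {s : ℝ} (hs : 1 ≤ s) (N : ℕ) :
    ∑ m ∈ range N, s / ((m : ℝ) ^ 2 + s ^ 2) ≤ 4 := by
  set f : ℕ → ℝ := fun m => 2 * s / (m + s - 1 / 2)
  calc ∑ m ∈ range N, s / ((m : ℝ) ^ 2 + s ^ 2) ≤ ∑ m ∈ range N, (f m - f (m + 1)) :=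
        sum_le_sum fun m _ => by simpa [f, add_right_comm] using div_natCast_sq_add_sq_le_sub hs m
    _ = f 0 - f N := sum_range_sub' f N
    _ ≤ 4 := by
        have hfN : 0 ≤ f N := div_nonneg (by linarith) (by linarith [N.cast_nonneg (α := ℝ)])
        have hf0 : f 0 ≤ 4 := by
          simp only [f, Nat.cast_zero, zero_add]
          rw [div_le_iff₀ (by linarith)]; linarith
        linarith

theorem summable_div_natCast_sq_add_sq {s : ℝ} (hs : 1 ≤ s) :
    Summable fun m : ℕ => s / ((m : ℝ) ^ 2 + s ^ 2) :=
  summable_of_sum_range_le (fun m => by positivity) (sum_range_div_natCast_sq_add_sq_le hs)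

theorem tsum_div_natCast_sq_add_sq_le {s : ℝ} (hs : 1 ≤ s) :
    ∑' m : ℕ, s / ((m : ℝ) ^ 2 + s ^ 2) ≤ 4 :=
  Real.tsum_le_of_sum_range_le (fun m => by positivity) (sum_range_div_natCast_sq_add_sq_le hs)

theorem antitoneOn_div_sq_add_sq {s : ℝ} (hs : 0 < s) :
    AntitoneOn (fun t : ℝ => s / (t ^ 2 + s ^ 2)) (Set.Ici 0) := fun t ht u _ htu => by
  dsimp only
  gcongr

theorem tsum_int_div_sub_sq_add_sq_le {s : ℝ} (hs : 1 ≤ s) (x : ℝ) :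
    ∑' k : ℤ, s / ((k - x) ^ 2 + s ^ 2) ≤ 8 := by
  have hs₀ : 0 < s := by linarith
  calc ∑' k : ℤ, s / ((k - x) ^ 2 + s ^ 2)
      ≤ 2 * ∑' m : ℕ, s / ((m : ℝ) ^ 2 + s ^ 2) :=
        tsum_int_comp_sub_le_two_mul_tsum_nat (g := fun t => s / (t ^ 2 + s ^ 2))
          (fun t => by positivity) (fun t => by simp only [neg_sq])
          (antitoneOn_div_sq_add_sq hs₀) (summable_div_natCast_sq_add_sq hs) x
    _ ≤ 8 := by linarith [tsum_div_natCast_sq_add_sq_le hs]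

/-- Let `a > 0` and `λ ∈ ℂ` with `Im λ ≥ 2π/a`.  The rank-one integral operator `K` on
`L²(μ_a)` with kernel `K(x,t) = -Im λ/((x - conj λ)(t - conj λ))` has operator norm
`‖K‖ = Im λ·‖1/(x - conj λ)‖²_{L²(μ_a)} = Im λ·Σ_{x ∈ Z_a}(2π/a)/|x - conj λ|²`, and this
quantity is bounded by a universal constant `C` independent of `λ` and `a`. -/
theorem stmt_18 :
    ∃ C : ℝ, 0 < C ∧ ∀ (a : ℝ) (l : ℂ), 0 < a → 2*Real.pi/a ≤ l.im →
      l.im * ∑' k : ℤ, (2*Real.pi/a) / ‖((2*Real.pi*(k:ℝ)/a : ℝ) : ℂ) - (starRingEnd ℂ) l‖^2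
        ≤ C := by
  refine ⟨8, by norm_num, fun a l ha hl => ?_⟩
  set δ := 2 * Real.pi / a
  have hδ : 0 < δ := by positivity
  have hs : 1 ≤ l.im / δ := (one_le_div hδ).mpr hl
  have h_term : ∀ k : ℤ, l.im * (δ / ‖((2 * Real.pi * (k : ℝ) / a : ℝ) : ℂ) - conj l‖ ^ 2)
      = l.im / δ / ((k - l.re / δ) ^ 2 + (l.im / δ) ^ 2) := fun k => by
    rw [Complex.sq_norm_ofReal_sub_conj, show 2 * Real.pi * (k : ℝ) / a = δ * k by ring]
    field_simp
  rw [← tsum_mul_left, tsum_congr h_term]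
  exact tsum_int_div_sub_sq_add_sq_le hs _
end

section
/- Let 0 < p ≤ 1, a > 0, n = [1/p]. Suppose F : ℝ → ℂ is defined piecewise on the intervals I_k = [(2π/a)·n·k, (2π/a)·n·(k+1)] as the unique polynomial P_k of degree ≤ n interpolating a given function f : Z_a → ℂ at the n+1 lattice points of I_k ∩ Z_a. Then for any interval J that is a union of consecutive intervals I_ℓ, ..., I_{ℓ+N} (N ≥ 1), and any polynomial P of degree at most n: (1/|J|)·∫_J |F(x) - P(x)| dx ≤ c_p · (1/μ_a(J))·∫_J |f(x) - P(x)| dμ_a(x). -/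
open MeasureTheory

open Finset

lemma lagrange_sup_bound (n : ℕ) (hn : 1 ≤ n) (h : ℝ) (hh : 0 < h) (b : ℝ)
    (Q : Polynomial ℂ) (hQ : Q.natDegree ≤ n) {x : ℝ}
    (hx : x ∈ Set.Icc b (b + h * n)) :
    ‖Q.eval (x:ℂ)‖ ≤ (n:ℝ)^n * ∑ j ∈ Finset.range (n+1), ‖Q.eval ((b + h*j : ℝ):ℂ)‖ := by
  classical
  have hinj : Set.InjOn (fun j : ℕ => ((b + h*j : ℝ) : ℂ)) (Finset.range (n+1)) := by
    intro i _ j _ hij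
    have h2 : (b + h*(i:ℝ)) = (b + h*(j:ℝ)) := Complex.ofReal_inj.mp hij
    have : (i:ℝ) = j := mul_left_cancel₀ (ne_of_gt hh) (by linarith : h*(i:ℝ) = h*(j:ℝ))
    exact_mod_cast this
  have hdeg : Q.degree < (Finset.range (n+1)).card := by
    rw [Finset.card_range]
    calc Q.degree ≤ (Q.natDegree : WithBot ℕ) := Polynomial.degree_le_natDegree
    _ ≤ (n : WithBot ℕ) := by exact_mod_cast hQ
    _ < ((n+1 : ℕ) : WithBot ℕ) := by exact_mod_cast Nat.lt_succ_self n
  have hQeq := Lagrange.eq_interpolate hinj hdeg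
  -- basis bound
  have hbasis : ∀ i ∈ Finset.range (n+1),
      ‖(Lagrange.basis (Finset.range (n+1)) (fun j : ℕ => ((b + h*j : ℝ) : ℂ)) i).eval (x:ℂ)‖
        ≤ (n:ℝ)^n := by
    intro i hi
    rw [Lagrange.basis, Polynomial.eval_prod]
    rw [norm_prod]
    have hcard : ((Finset.range (n+1)).erase i).card = n := by
      rw [Finset.card_erase_of_mem hi, Finset.card_range]; omega
    calc ∏ j ∈ (Finset.range (n+1)).erase i,
          ‖(Lagrange.basisDivisor ((b + h*i : ℝ):ℂ) ((b + h*j : ℝ):ℂ)).eval (x:ℂ)‖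
        ≤ ∏ j ∈ (Finset.range (n+1)).erase i, (n:ℝ) := by
          apply Finset.prod_le_prod (fun _ _ => norm_nonneg _)
          intro j hj
          obtain ⟨hji, hjr⟩ := Finset.mem_erase.mp hj
          have hjn : (j:ℝ) ≤ n := by exact_mod_cast Nat.lt_succ_iff.mp (Finset.mem_range.mp hjr)
          have hin : (i:ℝ) ≤ n := by exact_mod_cast Nat.lt_succ_iff.mp (Finset.mem_range.mp hi)
          rw [Lagrange.basisDivisor]
          rw [Polynomial.eval_mul, Polynomial.eval_C, Polynomial.eval_sub, Polynomial.eval_X,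
            Polynomial.eval_C, norm_mul, norm_inv]
          have e1 : ((b + h*i : ℝ):ℂ) - ((b + h*j : ℝ):ℂ) = ((h*i - h*j : ℝ):ℂ) := by
            push_cast; ring
          have e2 : (x:ℂ) - ((b + h*j : ℝ):ℂ) = ((x - (b + h*j) : ℝ):ℂ) := by
            push_cast; ring
          rw [e1, e2, Complex.norm_real, Complex.norm_real]
          have hden : h ≤ |h*i - h*j| := by
            rw [← mul_sub, abs_mul, abs_of_pos hh]
            have hij : i ≠ j := fun hc => hji hc.symm
            have h1 : (1:ℤ) ≤ |(i:ℤ) - j| := Int.one_le_abs (by omega)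
            have : (1:ℝ) ≤ |(i:ℝ) - j| := by
              calc (1:ℝ) = ((1:ℤ):ℝ) := by norm_num
              _ ≤ ((|(i:ℤ) - (j:ℤ)| : ℤ) : ℝ) := by exact_mod_cast h1
              _ = |(i:ℝ) - j| := by rw [Int.cast_abs]; push_cast; ring_nf
            nlinarith
          have hnum : |x - (b + h*j)| ≤ h*n := by
            rw [abs_le]
            obtain ⟨hx1, hx2⟩ := hx
            constructor
            · nlinarith
            · nlinarith [mul_nonneg hh.le (Nat.cast_nonneg j : (0:ℝ) ≤ j)]
          have hdpos : 0 < |h*i - h*j| := lt_of_lt_of_le hh hden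
          rw [Real.norm_eq_abs, Real.norm_eq_abs, inv_mul_le_iff₀ hdpos]
          calc |x - (b + h*j)| ≤ h*n := hnum
          _ ≤ |h*i - h*j| * n := by
              apply mul_le_mul_of_nonneg_right hden (Nat.cast_nonneg n)
      _ = (n:ℝ)^n := by rw [Finset.prod_const, hcard]
  -- now evaluate
  conv_lhs => rw [hQeq]
  rw [Lagrange.interpolate_apply, Polynomial.eval_finset_sum]
  calc ‖∑ i ∈ Finset.range (n+1),
        (Polynomial.C (Q.eval ((b + h*i : ℝ):ℂ)) *
          Lagrange.basis (Finset.range (n+1)) (fun j : ℕ => ((b + h*j : ℝ):ℂ)) i).eval (x:ℂ)‖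
      ≤ ∑ i ∈ Finset.range (n+1), ‖(Polynomial.C (Q.eval ((b + h*i : ℝ):ℂ)) *
          Lagrange.basis (Finset.range (n+1)) (fun j : ℕ => ((b + h*j : ℝ):ℂ)) i).eval (x:ℂ)‖ :=
        norm_sum_le _ _
    _ ≤ ∑ i ∈ Finset.range (n+1), ‖Q.eval ((b + h*i : ℝ):ℂ)‖ * (n:ℝ)^n := by
        apply Finset.sum_le_sum
        intro i hi
        rw [Polynomial.eval_mul, Polynomial.eval_C, norm_mul]
        exact mul_le_mul_of_nonneg_left (hbasis i hi) (norm_nonneg _)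
    _ = (n:ℝ)^n * ∑ j ∈ Finset.range (n+1), ‖Q.eval ((b + h*j : ℝ):ℂ)‖ := by
        rw [← Finset.sum_mul, mul_comm]



lemma integrable_dirac_any {g : ℝ → ℝ} (x : ℝ) : Integrable g (Measure.dirac x) := by
  have hae : g =ᵐ[Measure.dirac x] fun _ => g x := by
    rw [MeasureTheory.ae_dirac_eq]; rfl
  exact (integrable_congr hae).mpr (integrable_const _)

lemma latticeMeasure_restrict (a : ℝ) (ha : 0 < a) (lo hi : ℤ) :
    (latticeMeasure a).restrict (Set.Icc ((2*Real.pi/a)*lo) ((2*Real.pi/a)*hi)) =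
      ENNReal.ofReal (2*Real.pi/a) •
        ∑ k ∈ Finset.Icc lo hi, Measure.dirac ((2*Real.pi/a)*(k:ℝ)) := by
  classical
  have hh : 0 < 2*Real.pi/a := by positivity
  have hmem : ∀ k : ℤ, ((2*Real.pi/a)*(k:ℝ) ∈
      Set.Icc ((2*Real.pi/a)*(lo:ℝ)) ((2*Real.pi/a)*(hi:ℝ))) ↔ k ∈ Finset.Icc lo hi := by
    intro k
    simp only [Set.mem_Icc, Finset.mem_Icc]
    constructor
    · rintro ⟨h1, h2⟩
      constructor
      · exact_mod_cast le_of_mul_le_mul_left h1 hh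
      · exact_mod_cast le_of_mul_le_mul_left h2 hh
    · rintro ⟨h1, h2⟩
      constructor
      · exact mul_le_mul_of_nonneg_left (by exact_mod_cast h1) hh.le
      · exact mul_le_mul_of_nonneg_left (by exact_mod_cast h2) hh.le
  rw [latticeMeasure, Measure.restrict_smul,
    Measure.restrict_sum _ measurableSet_Icc]
  congr 1
  have heq : (fun k : ℤ => (Measure.dirac ((2*Real.pi/a)*(k:ℝ))).restrict
      (Set.Icc ((2*Real.pi/a)*(lo:ℝ)) ((2*Real.pi/a)*(hi:ℝ)))) =
      fun k : ℤ => if k ∈ Finset.Icc lo hi then Measure.dirac ((2*Real.pi/a)*(k:ℝ)) else 0 := by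
    funext k
    rw [MeasureTheory.restrict_dirac]
    by_cases hk : k ∈ Finset.Icc lo hi
    · rw [if_pos ((hmem k).mpr hk), if_pos hk]
    · rw [if_neg (fun hc => hk ((hmem k).mp hc)), if_neg hk]
  rw [heq]
  ext s hs
  rw [Measure.sum_apply _ hs, Measure.coe_finset_sum, Finset.sum_apply]
  rw [tsum_eq_sum (s := Finset.Icc lo hi) (fun k hk => by rw [if_neg hk]; rfl)]
  exact Finset.sum_congr rfl fun k hk => by rw [if_pos hk]

lemma latticeMeasure_integral (a : ℝ) (ha : 0 < a) (lo hi : ℤ) (g : ℝ → ℝ) :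
    ∫ x in Set.Icc ((2*Real.pi/a)*lo) ((2*Real.pi/a)*hi), g x ∂(latticeMeasure a) =
      (2*Real.pi/a) * ∑ k ∈ Finset.Icc lo hi, g ((2*Real.pi/a)*k) := by
  have hh : 0 < 2*Real.pi/a := by positivity
  rw [latticeMeasure_restrict a ha lo hi, integral_smul_measure,
    integral_finset_sum_measure (fun k _ => integrable_dirac_any _)]
  rw [ENNReal.toReal_ofReal hh.le, smul_eq_mul]
  congr 1
  exact Finset.sum_congr rfl fun k _ => integral_dirac g _

lemma latticeMeasure_apply (a : ℝ) (ha : 0 < a) (lo hi : ℤ) (hlohi : lo ≤ hi) :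
    (latticeMeasure a (Set.Icc ((2*Real.pi/a)*lo) ((2*Real.pi/a)*hi))).toReal =
      (2*Real.pi/a) * ((hi - lo : ℤ) + 1) := by
  have hh : 0 < 2*Real.pi/a := by positivity
  have h1 : latticeMeasure a (Set.Icc ((2*Real.pi/a)*lo) ((2*Real.pi/a)*hi)) =
      ((latticeMeasure a).restrict (Set.Icc ((2*Real.pi/a)*lo) ((2*Real.pi/a)*hi))) Set.univ := by
    rw [Measure.restrict_apply_univ]
  rw [h1, latticeMeasure_restrict a ha lo hi]
  rw [Measure.smul_apply, Measure.coe_finset_sum, Finset.sum_apply]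
  simp only [Measure.dirac_apply_of_mem (Set.mem_univ _)]
  rw [Finset.sum_const, Int.card_Icc, smul_eq_mul, nsmul_eq_mul, mul_one,
    ENNReal.toReal_mul, ENNReal.toReal_ofReal hh.le, ENNReal.toReal_natCast]
  have h2 : ((hi + 1 - lo).toNat : ℤ) = hi + 1 - lo := Int.toNat_of_nonneg (by omega)
  have h3 : (((hi + 1 - lo).toNat : ℤ) : ℝ) = ((hi:ℝ) + 1 - lo) := by rw [h2]; push_cast; ring
  push_cast at h3
  rw [h3]
  push_cast
  ring

lemma integral_Ioc_split (g : ℝ → ℝ) (e : ℤ → ℝ) (B : ℤ → ℝ)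
    (hmono : ∀ k : ℤ, e k ≤ e (k+1))
    (hint : ∀ k : ℤ, IntegrableOn g (Set.Ioc (e k) (e (k+1))))
    (hbd : ∀ k : ℤ, (∫ x in Set.Ioc (e k) (e (k+1)), g x) ≤ B k)
    (ℓ : ℤ) : ∀ m : ℕ, e ℓ ≤ e (ℓ + m) ∧ IntegrableOn g (Set.Ioc (e ℓ) (e (ℓ + m))) ∧
      (∫ x in Set.Ioc (e ℓ) (e (ℓ + m)), g x) ≤ ∑ i ∈ Finset.range m, B (ℓ + i) := by
  intro m
  induction m with
  | zero =>
    refine ⟨by simp, ?_, ?_⟩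
    · simp only [Nat.cast_zero, add_zero, Set.Ioc_self]
      exact integrableOn_empty
    · simp
  | succ m ih =>
    obtain ⟨hle, hintg, hsum⟩ := ih
    have hcast : ℓ + ((m:ℕ)+1 : ℕ) = (ℓ + m) + 1 := by push_cast; ring
    rw [hcast]
    have h1 : e (ℓ+m) ≤ e ((ℓ+m)+1) := hmono _
    have hunion : Set.Ioc (e ℓ) (e ((ℓ+m)+1)) =
        Set.Ioc (e ℓ) (e (ℓ+m)) ∪ Set.Ioc (e (ℓ+m)) (e ((ℓ+m)+1)) :=
      (Set.Ioc_union_Ioc_eq_Ioc hle h1).symm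
    refine ⟨le_trans hle h1, ?_, ?_⟩
    · rw [hunion]; exact hintg.union (hint _)
    · rw [hunion, setIntegral_union (Set.Ioc_disjoint_Ioc_of_le le_rfl) measurableSet_Ioc hintg (hint _),
        Finset.sum_range_succ]
      exact add_le_add hsum (hbd _)

lemma counting_bound (n : ℕ) (hn : 1 ≤ n) (u : ℤ → ℝ) (hu : ∀ m, 0 ≤ u m)
    (ℓ : ℤ) (N : ℕ) :
    ∑ i ∈ Finset.range (N+1), ∑ j ∈ Finset.range (n+1), u ((n:ℤ)*(ℓ+i)+j)
      ≤ 2 * ∑ m ∈ Finset.Icc ((n:ℤ)*ℓ) ((n:ℤ)*(ℓ+N+1)), u m := by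
  have hn' : (1:ℤ) ≤ n := by exact_mod_cast hn
  have hsplit : ∀ i ∈ Finset.range (N+1), ∑ j ∈ Finset.range (n+1), u ((n:ℤ)*(ℓ+i)+j)
      = (∑ j ∈ Finset.range n, u ((n:ℤ)*(ℓ+i)+j+1)) + u ((n:ℤ)*(ℓ+i)) := by
    intro i _
    rw [Finset.sum_range_succ']
    congr 1
    · refine Finset.sum_congr rfl fun j _ => ?_
      congr 1; push_cast; ring
    · congr 1; push_cast; ring
  rw [Finset.sum_congr rfl hsplit, Finset.sum_add_distrib]
  have partA : ∑ i ∈ Finset.range (N+1), u ((n:ℤ)*(ℓ+i))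
      ≤ ∑ m ∈ Finset.Icc ((n:ℤ)*ℓ) ((n:ℤ)*(ℓ+N+1)), u m := by
    have hinj : ∀ i1 ∈ Finset.range (N+1), ∀ i2 ∈ Finset.range (N+1),
        (fun i : ℕ => (n:ℤ)*(ℓ+i)) i1 = (fun i : ℕ => (n:ℤ)*(ℓ+i)) i2 → i1 = i2 := by
      intro i1 _ i2 _ heq
      simp only at heq
      have := mul_left_cancel₀ (by omega : (n:ℤ) ≠ 0) heq
      omega
    rw [← Finset.sum_image hinj]
    apply Finset.sum_le_sum_of_subset_of_nonneg
    · intro m hm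
      obtain ⟨i, hi, rfl⟩ := Finset.mem_image.mp hm
      have hiN : (i:ℤ) ≤ N := by
        have := Finset.mem_range.mp hi; omega
      rw [Finset.mem_Icc]
      constructor
      · nlinarith [Int.natCast_nonneg n, (Int.natCast_nonneg i : (0:ℤ) ≤ i)]
      · nlinarith
    · exact fun m _ _ => hu m
  have partB : ∑ i ∈ Finset.range (N+1), ∑ j ∈ Finset.range n, u ((n:ℤ)*(ℓ+i)+j+1)
      ≤ ∑ m ∈ Finset.Icc ((n:ℤ)*ℓ) ((n:ℤ)*(ℓ+N+1)), u m := by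
    rw [← Finset.sum_product']
    have hinj : ∀ q1 ∈ Finset.range (N+1) ×ˢ Finset.range n,
        ∀ q2 ∈ Finset.range (N+1) ×ˢ Finset.range n,
        (fun q : ℕ × ℕ => (n:ℤ)*(ℓ+q.1)+q.2+1) q1 = (fun q : ℕ × ℕ => (n:ℤ)*(ℓ+q.1)+q.2+1) q2 →
          q1 = q2 := by
      rintro ⟨i1, j1⟩ hm1 ⟨i2, j2⟩ hm2 heq
      simp only [Finset.mem_product, Finset.mem_range] at hm1 hm2
      simp only at heq
      have h1 : (n:ℤ)*((i1:ℤ) - i2) = (j2:ℤ) - j1 := by push_cast at heq ⊢; linarith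
      have hj1 : (j1:ℤ) < n := by exact_mod_cast hm1.2
      have hj2 : (j2:ℤ) < n := by exact_mod_cast hm2.2
      have hii : (i1:ℤ) = i2 := by
        by_contra hi
        have h2 : 1 ≤ |(i1:ℤ)-i2| := Int.one_le_abs (sub_ne_zero.mpr hi)
        have h3 : (n:ℤ) ≤ |(n:ℤ)*((i1:ℤ)-i2)| := by
          rw [abs_mul, abs_of_nonneg (by omega : (0:ℤ) ≤ (n:ℤ))]
          nlinarith
        rw [h1] at h3
        have h4 : |(j2:ℤ)-j1| < n := by
          rw [abs_lt]; omega
        omega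
      have hjj : (j1:ℤ) = j2 := by
        rw [hii] at h1; simp at h1; omega
      have : i1 = i2 := by exact_mod_cast hii
      have : j1 = j2 := by exact_mod_cast hjj
      simp_all
    rw [← Finset.sum_image hinj]
    apply Finset.sum_le_sum_of_subset_of_nonneg
    · intro m hm
      obtain ⟨⟨i, j⟩, hij, rfl⟩ := Finset.mem_image.mp hm
      simp only [Finset.mem_product, Finset.mem_range] at hij
      have hiN : (i:ℤ) ≤ N := by omega
      have hjn : (j:ℤ) + 1 ≤ n := by
        have := hij.2; omega
      rw [Finset.mem_Icc]
      constructor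
      · nlinarith [(Int.natCast_nonneg i : (0:ℤ) ≤ i), (Int.natCast_nonneg j : (0:ℤ) ≤ j)]
      · nlinarith [(Int.natCast_nonneg i : (0:ℤ) ≤ i)]
    · exact fun m _ _ => hu m
  calc _ ≤ _ + _ := add_le_add partB partA
  _ = 2 * ∑ m ∈ Finset.Icc ((n:ℤ)*ℓ) ((n:ℤ)*(ℓ+N+1)), u m := by ring

/-- Let `0 < p ≤ 1`, `n = ⌊1/p⌋`, `a > 0`.  Suppose `F : ℝ → ℂ` is defined piecewise on
the intervals `I_k = [(2π/a)·n·k, (2π/a)·n·(k+1)]` as a polynomial `P_k` of degree `≤ n`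
interpolating a given function `f` at the `n+1` lattice points of `I_k ∩ Z_a`.  Then for
every interval `J = I_ℓ ∪ ... ∪ I_{ℓ+N}` (`N ≥ 1`) and every polynomial `P` of degree at
most `n`,
`(1/|J|)·∫_J |F - P| dx ≤ c_p·(1/μ_a(J))·∫_J |f - P| dμ_a`,
with a constant `c_p` depending only on `p`. -/
theorem stmt_19 (p : ℝ) (hp : 0 < p) (hp1 : p ≤ 1) :
    ∃ c : ℝ, 0 < c ∧ ∀ (a : ℝ), 0 < a → ∀ (f F : ℝ → ℂ),
      (∀ k : ℤ, ∃ P : Polynomial ℂ, P.natDegree ≤ ⌊1/p⌋₊ ∧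
        (∀ x ∈ Set.Icc ((2*Real.pi/a)*(⌊1/p⌋₊:ℝ)*(k:ℝ)) ((2*Real.pi/a)*(⌊1/p⌋₊:ℝ)*((k:ℝ)+1)),
          F x = P.eval (x:ℂ)) ∧
        (∀ x ∈ Set.Icc ((2*Real.pi/a)*(⌊1/p⌋₊:ℝ)*(k:ℝ)) ((2*Real.pi/a)*(⌊1/p⌋₊:ℝ)*((k:ℝ)+1)),
          (∃ m : ℤ, x = 2*Real.pi*m/a) → P.eval (x:ℂ) = f x)) →
      ∀ (ℓ : ℤ) (N : ℕ), 1 ≤ N → ∀ P : Polynomial ℂ, P.natDegree ≤ ⌊1/p⌋₊ →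
        ((2*Real.pi/a)*(⌊1/p⌋₊:ℝ)*((N:ℝ)+1))⁻¹
            * (∫ x in Set.Icc ((2*Real.pi/a)*(⌊1/p⌋₊:ℝ)*(ℓ:ℝ))
                ((2*Real.pi/a)*(⌊1/p⌋₊:ℝ)*((ℓ:ℝ)+(N:ℝ)+1)), ‖F x - P.eval (x:ℂ)‖)
          ≤ c * ((latticeMeasure a (Set.Icc ((2*Real.pi/a)*(⌊1/p⌋₊:ℝ)*(ℓ:ℝ))
                ((2*Real.pi/a)*(⌊1/p⌋₊:ℝ)*((ℓ:ℝ)+(N:ℝ)+1)))).toReal)⁻¹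
              * (∫ x in Set.Icc ((2*Real.pi/a)*(⌊1/p⌋₊:ℝ)*(ℓ:ℝ))
                  ((2*Real.pi/a)*(⌊1/p⌋₊:ℝ)*((ℓ:ℝ)+(N:ℝ)+1)),
                  ‖f x - P.eval (x:ℂ)‖ ∂(latticeMeasure a)) := by
  classical
  set n := ⌊1/p⌋₊ with hn_def
  have hn : 1 ≤ n := Nat.le_floor (by rw [Nat.cast_one]; exact one_le_one_div hp hp1)
  have hn1 : (1:ℝ) ≤ n := by exact_mod_cast hn
  have hnpos : (0:ℝ) < n := by linarith
  refine ⟨4 * (n:ℝ)^(n+1), by positivity, ?_⟩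
  intro a ha f F hF ℓ N hN P hP
  have hh0 : 0 < 2*Real.pi/a := by positivity
  set h : ℝ := 2*Real.pi/a with hh_def
  have hh : 0 < h := hh0
  choose Q hQdeg hQF hQf using hF
  set u : ℤ → ℝ := fun m => ‖f (h*(m:ℝ)) - P.eval ((h*(m:ℝ) : ℝ):ℂ)‖ with hu_def
  set e : ℤ → ℝ := fun k => h*(n:ℝ)*(k:ℝ) with he_def
  set T : ℝ := ∑ m ∈ Finset.Icc ((n:ℤ)*ℓ) ((n:ℤ)*(ℓ+N+1)), u m with hT_def
  have hT0 : 0 ≤ T := Finset.sum_nonneg fun m _ => norm_nonneg _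
  -- per interval bound
  have key : ∀ k : ℤ, IntegrableOn (fun x => ‖F x - P.eval (x:ℂ)‖) (Set.Ioc (e k) (e (k+1)))
      ∧ (∫ x in Set.Ioc (e k) (e (k+1)), ‖F x - P.eval (x:ℂ)‖)
        ≤ h*(n:ℝ)*((n:ℝ)^n * ∑ j ∈ Finset.range (n+1), u ((n:ℤ)*k+j)) := by
    intro k
    have hek : e (k+1) = e k + h*(n:ℝ) := by simp only [he_def]; push_cast; ring
    have hIccEq : Set.Icc (e k) (e (k+1)) =
        Set.Icc (h*(n:ℝ)*(k:ℝ)) (h*(n:ℝ)*((k:ℝ)+1)) := by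
      simp only [he_def]; congr 1; push_cast; ring
    have hFk : ∀ x ∈ Set.Icc (e k) (e (k+1)), F x = (Q k).eval (x:ℂ) := by
      intro x hx; exact hQF k x (hIccEq ▸ hx)
    have hQk : (Q k - P).natDegree ≤ n :=
      le_trans (Polynomial.natDegree_sub_le _ _) (max_le (hQdeg k) hP)
    have hcont : Continuous (fun x : ℝ => ‖(Q k - P).eval ((x:ℝ):ℂ)‖) :=
      ((Polynomial.continuous _).comp Complex.continuous_ofReal).norm
    have hgeq : ∀ x ∈ Set.Icc (e k) (e (k+1)),
        ‖F x - P.eval (x:ℂ)‖ = ‖(Q k - P).eval (x:ℂ)‖ := by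
      intro x hx; rw [hFk x hx, Polynomial.eval_sub]
    have hint : IntegrableOn (fun x => ‖F x - P.eval (x:ℂ)‖) (Set.Ioc (e k) (e (k+1))) := by
      apply IntegrableOn.mono_set ?_ Set.Ioc_subset_Icc_self
      exact (hcont.integrableOn_Icc).congr_fun (fun x hx => (hgeq x hx).symm) measurableSet_Icc
    have hnode : ∀ j ∈ Finset.range (n+1),
        ‖(Q k - P).eval ((e k + h*(j:ℝ) : ℝ):ℂ)‖ = u ((n:ℤ)*k+j) := by
      intro j hj
      have hjn : (j:ℝ) ≤ n := by exact_mod_cast Nat.lt_succ_iff.mp (Finset.mem_range.mp hj)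
      have hxval : e k + h*(j:ℝ) = h*((((n:ℤ)*k+j : ℤ)):ℝ) := by
        simp only [he_def]; push_cast; ring
      have hmem : e k + h*(j:ℝ) ∈ Set.Icc (e k) (e (k+1)) := by
        rw [hek]
        constructor
        · nlinarith [hh.le, (Nat.cast_nonneg j : (0:ℝ) ≤ j)]
        · nlinarith [hh.le, (Nat.cast_nonneg j : (0:ℝ) ≤ j)]
      have hlat : ∃ m : ℤ, e k + h*(j:ℝ) = 2*Real.pi*(m:ℝ)/a := by
        refine ⟨(n:ℤ)*k+j, ?_⟩
        rw [hxval, hh_def]; ring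
      have hfeq := hQf k _ (hIccEq ▸ hmem) hlat
      rw [Polynomial.eval_sub, hfeq, hxval]
    have hbd : ∀ x ∈ Set.Ioc (e k) (e (k+1)), ‖F x - P.eval (x:ℂ)‖
        ≤ (n:ℝ)^n * ∑ j ∈ Finset.range (n+1), u ((n:ℤ)*k+j) := by
      intro x hx
      have hx' : x ∈ Set.Icc (e k) (e (k+1)) := Set.Ioc_subset_Icc_self hx
      rw [hgeq x hx']
      have hx'' : x ∈ Set.Icc (e k) (e k + h*(n:ℝ)) := by rw [← hek]; exact hx'
      calc ‖(Q k - P).eval (x:ℂ)‖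
          ≤ (n:ℝ)^n * ∑ j ∈ Finset.range (n+1), ‖(Q k - P).eval ((e k + h*(j:ℝ):ℝ):ℂ)‖ :=
            lagrange_sup_bound n hn h hh (e k) (Q k - P) hQk hx''
        _ = _ := by rw [Finset.sum_congr rfl hnode]
    refine ⟨hint, ?_⟩
    have hconst : IntegrableOn
        (fun _ : ℝ => (n:ℝ)^n * ∑ j ∈ Finset.range (n+1), u ((n:ℤ)*k+j))
        (Set.Ioc (e k) (e (k+1))) := integrableOn_const measure_Ioc_lt_top.ne
    calc (∫ x in Set.Ioc (e k) (e (k+1)), ‖F x - P.eval (x:ℂ)‖)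
        ≤ ∫ _x in Set.Ioc (e k) (e (k+1)),
            ((n:ℝ)^n * ∑ j ∈ Finset.range (n+1), u ((n:ℤ)*k+j)) :=
          setIntegral_mono_on hint hconst measurableSet_Ioc hbd
      _ = (volume (Set.Ioc (e k) (e (k+1)))).toReal *
            ((n:ℝ)^n * ∑ j ∈ Finset.range (n+1), u ((n:ℤ)*k+j)) := by
          rw [setIntegral_const, smul_eq_mul, measureReal_def]
      _ ≤ h*(n:ℝ)*((n:ℝ)^n * ∑ j ∈ Finset.range (n+1), u ((n:ℤ)*k+j)) := by
          rw [Real.volume_Ioc, hek]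
          rw [show e k + h*(n:ℝ) - e k = h*(n:ℝ) by ring, ENNReal.toReal_ofReal (by positivity)]
  -- split the integral
  obtain ⟨hle, hintg, hsum⟩ := integral_Ioc_split (fun x => ‖F x - P.eval (x:ℂ)‖) e
    (fun k => h*(n:ℝ)*((n:ℝ)^n * ∑ j ∈ Finset.range (n+1), u ((n:ℤ)*k+j)))
    (fun k => by
      simp only [he_def]; push_cast
      nlinarith [mul_pos hh hnpos])
    (fun k => (key k).1) (fun k => (key k).2) ℓ (N+1)
  -- LHS integral bound
  have hsetL : Set.Icc (h*(n:ℝ)*(ℓ:ℝ)) (h*(n:ℝ)*((ℓ:ℝ)+(N:ℝ)+1)) =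
      Set.Icc (e ℓ) (e (ℓ + ((N+1 : ℕ):ℤ))) := by
    simp only [he_def]; congr 1 <;> (push_cast; ring)
  have hL : (∫ x in Set.Icc (h*(n:ℝ)*(ℓ:ℝ)) (h*(n:ℝ)*((ℓ:ℝ)+(N:ℝ)+1)), ‖F x - P.eval (x:ℂ)‖)
      ≤ h*(n:ℝ)*((n:ℝ)^n*(2*T)) := by
    rw [hsetL, integral_Icc_eq_integral_Ioc]
    refine le_trans hsum ?_
    have hc := counting_bound n hn u (fun m => norm_nonneg _) ℓ N
    calc ∑ i ∈ Finset.range (N+1),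
          h*(n:ℝ)*((n:ℝ)^n * ∑ j ∈ Finset.range (n+1), u ((n:ℤ)*(ℓ+(i:ℤ))+j))
        = h*(n:ℝ)*(n:ℝ)^n * ∑ i ∈ Finset.range (N+1),
            ∑ j ∈ Finset.range (n+1), u ((n:ℤ)*(ℓ+(i:ℤ))+j) := by
          rw [Finset.mul_sum]
          exact Finset.sum_congr rfl fun i _ => by ring
      _ ≤ h*(n:ℝ)*(n:ℝ)^n * (2*T) := by
          apply mul_le_mul_of_nonneg_left _ (by positivity)
          exact hc
      _ = h*(n:ℝ)*((n:ℝ)^n*(2*T)) := by ring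
  -- RHS integral value
  have hsetR : Set.Icc (h*(n:ℝ)*(ℓ:ℝ)) (h*(n:ℝ)*((ℓ:ℝ)+(N:ℝ)+1)) =
      Set.Icc (h*((((n:ℤ)*ℓ) : ℤ):ℝ)) (h*((((n:ℤ)*(ℓ+N+1)) : ℤ):ℝ)) := by
    congr 1 <;> (push_cast; ring)
  have hμint := latticeMeasure_integral a ha ((n:ℤ)*ℓ) ((n:ℤ)*(ℓ+N+1))
    (fun x => ‖f x - P.eval (x:ℂ)‖)
  rw [← hh_def] at hμint
  have hμT : (∫ x in Set.Icc (h*(n:ℝ)*(ℓ:ℝ)) (h*(n:ℝ)*((ℓ:ℝ)+(N:ℝ)+1)),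
      ‖f x - P.eval (x:ℂ)‖ ∂(latticeMeasure a)) = h*T := by
    rw [hsetR, hμint, hT_def]
  have hlohi : (n:ℤ)*ℓ ≤ (n:ℤ)*(ℓ+N+1) := by
    apply mul_le_mul_of_nonneg_left (by omega) (by positivity)
  have hμapp := latticeMeasure_apply a ha ((n:ℤ)*ℓ) ((n:ℤ)*(ℓ+N+1)) hlohi
  rw [← hh_def] at hμapp
  have hμJ : (latticeMeasure a (Set.Icc (h*(n:ℝ)*(ℓ:ℝ)) (h*(n:ℝ)*((ℓ:ℝ)+(N:ℝ)+1)))).toReal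
      = h*((n:ℝ)*((N:ℝ)+1)+1) := by
    rw [hsetR, hμapp]
    congr 1
    push_cast; ring
  rw [hμJ, hμT]
  -- final arithmetic
  have hA : (1:ℝ) ≤ (N:ℝ)+1 := by
    have : (0:ℝ) ≤ N := Nat.cast_nonneg N
    linarith
  have hApos : (0:ℝ) < (N:ℝ)+1 := by linarith
  calc ((h*(n:ℝ)*((N:ℝ)+1))⁻¹) *
        (∫ x in Set.Icc (h*(n:ℝ)*(ℓ:ℝ)) (h*(n:ℝ)*((ℓ:ℝ)+(N:ℝ)+1)), ‖F x - P.eval (x:ℂ)‖)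
      ≤ (h*(n:ℝ)*((N:ℝ)+1))⁻¹ * (h*(n:ℝ)*((n:ℝ)^n*(2*T))) := by
        apply mul_le_mul_of_nonneg_left hL (inv_nonneg.mpr (by positivity))
    _ = 2*(n:ℝ)^n*T/((N:ℝ)+1) := by
        field_simp
    _ ≤ 4*(n:ℝ)^(n+1)*T/((n:ℝ)*((N:ℝ)+1)+1) := by
        rw [div_le_div_iff₀ hApos (by positivity)]
        have hkey : (n:ℝ)*((N:ℝ)+1)+1 ≤ 2*((n:ℝ)*((N:ℝ)+1)) := by nlinarith
        calc 2*(n:ℝ)^n*T*((n:ℝ)*((N:ℝ)+1)+1)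
            ≤ 2*(n:ℝ)^n*T*(2*((n:ℝ)*((N:ℝ)+1))) := by
              apply mul_le_mul_of_nonneg_left hkey (by positivity)
          _ = 4*(n:ℝ)^(n+1)*T*((N:ℝ)+1) := by rw [pow_succ]; ring
    _ = 4*(n:ℝ)^(n+1) * (h*((n:ℝ)*((N:ℝ)+1)+1))⁻¹ * (h*T) := by
        field_simp
end
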